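/- arXiv:1703.06899 — 3 statements merged into one kernel-verified Lean document; each statement's English description precedes it below -/
import Mathlib

section
/- Let q be a prime power, r an odd positive integer, and consider the affine curve C: y^q + y = x^{q^r+1} over F_{q^{2r}}. The number of affine F_{q^{2r}}-rational points of C is q^{2r+1}. -/
/-!
Put `q = p ^ n`. The map `φ y = y ^ q + y` is additive, so each of its values has exactly
`#ker φ` preimages, and the count is `q ^ (2r) * #ker φ` as soon as every `c = x ^ (q ^ r + 1)`
is a value of `φ`. Let `T z = ∑_{i < 2r} (-1) ^ i * z ^ (q ^ i)`. The sum `T (φ y)` telescopes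
to `y - y ^ (q ^ (2r)) = 0`, so `im φ ⊆ ker T`. Counting roots by degree, `#ker φ ≤ q` and
`#ker T ≤ q ^ (2r - 1)`, while `#ker φ * #im φ = q ^ (2r)`; hence `#ker φ = q` and
`im φ = ker T`. Finally `c ^ (q ^ r) = c`, so `T c = (1 + (-1) ^ r) * ∑_{i < r} (-1) ^ i * c ^ (q ^ i)`,
which vanishes because `r` is odd.
-/

open Finset Polynomial

lemma Polynomial.ncard_setOf_eval_eq_zero_le {R : Type*} [CommRing R] [IsDomain R] {P : R[X]}
    (hP : P ≠ 0) : {x | P.eval x = 0}.ncard ≤ P.natDegree :=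
  (Set.ncard_le_ncard (fun x hx => (mem_rootSet_of_ne hP).2 (by simpa using hx))
    (P.rootSet R).toFinite).trans (P.ncard_rootSet_le R)

lemma AddMonoidHom.ncard_setOf_apply_snd_eq {α G H : Type*} [Fintype α] [AddGroup G] [Fintype G]
    [AddMonoid H] (f : G →+ H) (g : α → H) (hg : ∀ a, g a ∈ Set.range f) :
    {P : α × G | f P.2 = g P.1}.ncard = Fintype.card α * Nat.card f.ker := by
  classical
  have hfiber : ∀ a, Nat.card {b // f b = g a} = Nat.card f.ker := fun a => by
    simp only [Nat.card_eq_fintype_card, Fintype.card_subtype,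
      AddMonoidHom.card_fiber_eq_of_mem_range f (hg a) ⟨0, f.map_zero⟩, AddMonoidHom.mem_ker]
  rw [← Nat.card_coe_set_eq, Set.coe_ofPred,
    Nat.card_congr (Equiv.subtypeProdEquivSigmaSubtype fun a b => f b = g a), Nat.card_sigma]
  simp only [hfiber, sum_const, card_univ, smul_eq_mul]

section CommRing

variable {R : Type*} [CommRing R]

lemma ncard_setOf_pow_add_self_eq_zero_le [IsDomain R] {q : ℕ} (hq : 1 < q) :
    {y : R | y ^ q + y = 0}.ncard ≤ q := by
  have hdeg : (X ^ q + X : R[X]).natDegree = q := by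
    rw [natDegree_add_eq_left_of_natDegree_lt] <;> simp [hq]
  have hne : (X ^ q + X : R[X]) ≠ 0 := ne_zero_of_natDegree_gt (n := 0) (by omega)
  simpa [hdeg] using ncard_setOf_eval_eq_zero_le hne

def altFrobSum (q m : ℕ) (z : R) : R :=
  ∑ i ∈ range m, (-1) ^ i * z ^ q ^ i

lemma ncard_setOf_altFrobSum_eq_zero_le [IsDomain R] {q m : ℕ} (hq : 1 < q) (hm : 0 < m) :
    {z : R | altFrobSum q m z = 0}.ncard ≤ q ^ (m - 1) := by
  set P : R[X] := ∑ i ∈ range m, C ((-1) ^ i) * X ^ q ^ i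
  have hdeg : P.natDegree ≤ q ^ (m - 1) := by
    refine natDegree_sum_le_of_forall_le _ _ fun i hi => ?_
    grw [natDegree_C_mul_X_pow_le]
    exact Nat.pow_le_pow_right (by omega) (by simp at hi; omega)
  have hcoeff : P.coeff 1 = 1 := by
    rw [finsetSum_coeff, sum_eq_single 0]
    · simp
    · intro i _ hi
      have : 1 < q ^ i := Nat.one_lt_pow hi hq
      rw [coeff_C_mul_X_pow, if_neg (by omega)]
    · simp [hm]
  have hne : P ≠ 0 := fun h => by simp [h] at hcoeff
  have heval : ∀ z, P.eval z = altFrobSum q m z := fun z => by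
    simp [P, altFrobSum, eval_finsetSum]
  simpa [heval] using (ncard_setOf_eval_eq_zero_le hne).trans hdeg

lemma altFrobSum_two_mul_of_pow_eq {q r : ℕ} {c : R} (hc : c ^ q ^ r = c) :
    altFrobSum q (2 * r) c = (1 + (-1) ^ r) * altFrobSum q r c := by
  have hshift : ∀ i, c ^ q ^ (r + i) = c ^ q ^ i := fun i => by rw [pow_add, pow_mul, hc]
  simp only [altFrobSum, two_mul, sum_range_add, hshift]
  simp only [pow_add, add_mul, one_mul, mul_sum, mul_assoc, sum_add_distrib]

variable (p : ℕ) [ExpChar R p] (n : ℕ)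

def frobAddId : R →+ R := (iterateFrobenius R p n).toAddMonoidHom + AddMonoidHom.id R

@[simp] lemma frobAddId_apply (y : R) : frobAddId p n y = y ^ p ^ n + y := rfl

lemma altFrobSum_frobAddId (m : ℕ) (y : R) :
    altFrobSum (p ^ n) m (frobAddId p n y) = y - (-1) ^ m * y ^ (p ^ n) ^ m := by
  induction m with
  | zero => simp [altFrobSum]
  | succ m ih =>
    rw [altFrobSum, sum_range_succ, ← altFrobSum, ih, frobAddId_apply, ← pow_mul,
      add_pow_expChar_pow]
    ring

end CommRing

theorem card_ker_frobAddId_and_range_eq {F : Type*} [Field F] [Fintype F] (p : ℕ) [ExpChar F p]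
    {n r : ℕ} (hq : 1 < p ^ n) (hr : 0 < r) (hF : Fintype.card F = (p ^ n) ^ (2 * r)) :
    Nat.card (frobAddId p n : F →+ F).ker = p ^ n ∧
      Set.range (frobAddId p n : F →+ F) = {c | altFrobSum (p ^ n) (2 * r) c = 0} := by
  set φ : F →+ F := frobAddId p n
  have hrange : Set.range φ ⊆ {c | altFrobSum (p ^ n) (2 * r) c = 0} := by
    rintro _ ⟨y, rfl⟩
    rw [Set.mem_ofPred_eq, altFrobSum_frobAddId, ← hF, FiniteField.pow_card,
      (even_two_mul r).neg_one_pow, one_mul, sub_self]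
  have hker : Nat.card φ.ker ≤ p ^ n := by
    have hker_eq : (φ.ker : Set F) = {y | y ^ p ^ n + y = 0} := by ext; simp [φ]
    rw [← SetLike.coe_sort_coe, hker_eq, Nat.card_coe_set_eq]
    exact ncard_setOf_pow_add_self_eq_zero_le hq
  have hrange_le : (Set.range φ).ncard ≤ (p ^ n) ^ (2 * r - 1) :=
    (Set.ncard_le_ncard hrange).trans (ncard_setOf_altFrobSum_eq_zero_le hq (by omega))
  have hmul : Nat.card φ.ker * (Set.range φ).ncard = p ^ n * (p ^ n) ^ (2 * r - 1) := by
    rw [← pow_succ', Nat.sub_add_cancel (by omega), ← hF, ← Nat.card_eq_fintype_card,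
      ← φ.ker.card_mul_index, AddSubgroup.index_ker, ← AddMonoidHom.coe_range,
      ← Nat.card_coe_set_eq, SetLike.coe_sort_coe]
  obtain ⟨hker_eq, hrange_eq⟩ := (mul_eq_mul_iff_eq_and_eq_of_pos' hker hrange_le
    (by omega) ((Set.ncard_pos (Set.toFinite _)).2 (Set.range_nonempty φ))).1 hmul
  refine ⟨hker_eq, Set.eq_of_subset_of_ncard_le hrange ?_⟩
  rw [hrange_eq]
  exact ncard_setOf_altFrobSum_eq_zero_le hq (by omega)

theorem stmt7_general (q r : ℕ) (hq : ∃ (p n : ℕ), p.Prime ∧ 0 < n ∧ q = p ^ n)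
    (hr : Odd r)
    (F : Type*) [Field F] [Fintype F] (hF : Fintype.card F = q ^ (2 * r)) :
    {P : F × F | P.2 ^ q + P.2 = P.1 ^ (q ^ r + 1)}.ncard = q ^ (2 * r + 1) := by
  obtain ⟨p, n, hp, hn, rfl⟩ := hq
  have : Fact p.Prime := ⟨hp⟩
  have : CharP F p := charP_of_card_eq_prime_pow (hF.trans (pow_mul p n _).symm)
  obtain ⟨hker, hrange⟩ :=
    card_ker_frobAddId_and_range_eq (F := F) p (Nat.one_lt_pow hn.ne' hp.one_lt) hr.pos hF
  have hnorm_mem : ∀ x : F, x ^ ((p ^ n) ^ r + 1) ∈ Set.range (frobAddId p n : F →+ F) := by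
    intro x
    set Q := (p ^ n) ^ r
    have hQQ : x ^ (Q * Q) = x := by rw [← pow_add, ← two_mul, ← hF, FiniteField.pow_card]
    have hfix : (x ^ (Q + 1)) ^ Q = x ^ (Q + 1) := by
      rw [← pow_mul, add_one_mul, pow_add, hQQ, pow_succ']
    rw [hrange, Set.mem_ofPred_eq, altFrobSum_two_mul_of_pow_eq hfix, hr.neg_one_pow,
      add_neg_cancel, zero_mul]
  have hcount := (frobAddId (R := F) p n).ncard_setOf_apply_snd_eq
    (fun x => x ^ ((p ^ n) ^ r + 1)) hnorm_mem
  rwa [hF, hker, ← pow_succ] at hcount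

theorem stmt7 (q r : ℕ) (hq : ∃ (p n : ℕ), p.Prime ∧ 0 < n ∧ q = p ^ n)
    (hr : Odd r) (hr' : 0 < r)
    (F : Type*) [Field F] [Fintype F] (hF : Fintype.card F = q ^ (2 * r)) :
    {P : F × F | P.2 ^ q + P.2 = P.1 ^ (q ^ r + 1)}.ncard = q ^ (2 * r + 1) :=
  stmt7_general q r hq hr F hF
end

section
/- Let q be a prime power and m > 2 a divisor of q+1. The affine curve y^q + y = x^m over F_{q²} has exactly q(1 + m(q-1)) affine F_{q²}-rational points. -/
/-!
Write `q = p ^ n` with `p` the characteristic of `F`, which `#F = q²` forces. The map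
`T y = y ^ q + y` is additive; its kernel consists of roots of `X ^ q + X` and its image
lies among the roots of `X ^ q - X`, so both have at most `q` elements, and since their sizes
multiply to `q²` both have exactly `q`. Hence `T y = c` has `q` solutions when `c ^ q = c` and none
otherwise, and the count is `q` times the number of `x` with `(x ^ m) ^ q = x ^ m`: these are `0`
and the `m (q - 1)`-th roots of unity, and `m (q - 1) ∣ q² - 1 = #Fˣ` with `Fˣ` cyclic.
-/

open Finset Polynomial

theorem pow_pow_eq_self_iff {G₀ : Type*} [GroupWithZero G₀] {x : G₀} {m q : ℕ}
    (hm : m ≠ 0) (hq : q ≠ 0) :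
    (x ^ m) ^ q = x ^ m ↔ x = 0 ∨ x ^ (m * (q - 1)) = 1 := by
  rcases eq_or_ne x 0 with rfl | hx
  · simp [hm, hq]
  · have : (x ^ m) ^ q = x ^ (m * (q - 1)) * x ^ m := by
      rw [← pow_mul, ← pow_add]; congr 1; cases q <;> simp_all [Nat.mul_succ]
    rw [this, mul_eq_right₀ (pow_ne_zero m hx)]
    simp [hx]

theorem Fintype.two_le_of_card_eq_sq {α : Type*} [Fintype α] [Nontrivial α] {q : ℕ}
    (h : Fintype.card α = q ^ 2) : 2 ≤ q := by
  have := Fintype.one_lt_card (α := α)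
  rw [h, Nat.one_lt_pow_iff two_ne_zero] at this
  omega

theorem card_filter_pow_eq_mul_le {R : Type*} [CommRing R] [IsDomain R] [Fintype R]
    [DecidableEq R] {q : ℕ} (hq : 2 ≤ q) (c : R) :
    #{x : R | x ^ q = c * x} ≤ q := by
  have hdeg : (X ^ q - C c * X : R[X]).natDegree = q := by
    rw [natDegree_sub_eq_left_of_natDegree_lt, natDegree_X_pow]
    calc (C c * X).natDegree ≤ 1 := (natDegree_C_mul_le c X).trans natDegree_X_le
      _ < (X ^ q : R[X]).natDegree := by rw [natDegree_X_pow]; omega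
  have hne : (X ^ q - C c * X : R[X]) ≠ 0 := fun h => by simp [h] at hdeg; omega
  calc #{x : R | x ^ q = c * x} ≤ (X ^ q - C c * X : R[X]).natDegree :=
        card_le_degree_of_subset_roots fun x hx => by
          simp_all [mem_roots hne, sub_eq_zero]
    _ = q := hdeg

section Field

variable {K : Type*} [Field K] [Fintype K] [DecidableEq K]

theorem FiniteField.card_filter_pow_eq_one {d : ℕ} (hd : d ∣ Fintype.card K - 1)
    (hd0 : d ≠ 0) :
    #{x : K | x ^ d = 1} = d := by
  obtain ⟨g, hg⟩ := IsCyclic.exists_ofOrder_eq_natCard (α := Kˣ)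
  have hprim : IsPrimitiveRoot (g : K) (Fintype.card K - 1) := by
    rw [IsPrimitiveRoot.coe_units_iff, ← Fintype.card_units, ← Nat.card_eq_fintype_card, ← hg]
    exact IsPrimitiveRoot.orderOf g
  obtain ⟨c, hc⟩ := hd
  have : #{x : K | x ^ d = 1} = #(nthRootsFinset d (1 : K)) := by
    congr 1; ext x; simp [mem_nthRootsFinset (Nat.pos_of_ne_zero hd0)]
  rw [this, (hprim.pow (Nat.sub_pos_of_lt Fintype.one_lt_card)
    (hc.trans (mul_comm d c))).card_nthRootsFinset]

theorem card_filter_pow_pow_eq_pow {q m : ℕ} (hK : Fintype.card K = q ^ 2) (hm : m ∣ q + 1) :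
    #{x : K | (x ^ m) ^ q = x ^ m} = 1 + m * (q - 1) := by
  have hq := Fintype.two_le_of_card_eq_sq hK
  have hm0 : m ≠ 0 := by rintro rfl; simp at hm
  have hd0 : m * (q - 1) ≠ 0 := mul_ne_zero hm0 (by omega)
  have hd : m * (q - 1) ∣ Fintype.card K - 1 := by
    rw [hK, ← one_pow 2, Nat.sq_sub_sq]
    exact mul_dvd_mul_right hm _
  have : ({x : K | (x ^ m) ^ q = x ^ m} : Finset K) =
      insert 0 ({x | x ^ (m * (q - 1)) = 1} : Finset K) := by
    ext x
    simp [pow_pow_eq_self_iff hm0 (by omega : q ≠ 0)]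
  rw [this, card_insert_of_notMem (by simp [hd0]), FiniteField.card_filter_pow_eq_one hd hd0,
    add_comm]

end Field

section AddGroup

variable {G H : Type*} [AddGroup G] [AddGroup H] [Fintype G] [DecidableEq H]

theorem AddMonoidHom.card_fiber_eq_card_ker (f : G →+ H) {c : H} (hc : c ∈ univ.image f) :
    #{x | f x = c} = #{x | f x = 0} := by
  obtain ⟨x₀, -, rfl⟩ := mem_image.1 hc
  refine card_nbij' (· - x₀) (· + x₀) ?_ ?_ ?_ ?_ <;> intro x <;> simp_all

theorem AddMonoidHom.card_image_mul_card_ker (f : G →+ H) :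
    #(univ.image f) * #{x | f x = 0} = Fintype.card G := by
  rw [← card_univ, card_eq_sum_card_image f univ, sum_const_nat]
  intro c hc
  simpa using f.card_fiber_eq_card_ker hc

end AddGroup

section FrobeniusTrace

variable (K : Type*) [Field K] (p n : ℕ) [ExpChar K p]

/-- The trace of `K` over its subfield with `p ^ n` elements, when `#K = (p ^ n) ^ 2`. -/
def frobeniusTrace : K →+ K := (iterateFrobenius K p n : K →+ K) + AddMonoidHom.id K

variable {K p n}

@[simp]
theorem frobeniusTrace_apply (y : K) : frobeniusTrace K p n y = y ^ p ^ n + y := rfl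

variable [Fintype K] (hK : Fintype.card K = (p ^ n) ^ 2)
include hK

theorem frobeniusTrace_pow_self (y : K) :
    frobeniusTrace K p n y ^ p ^ n = frobeniusTrace K p n y := by
  rw [frobeniusTrace_apply, ← iterateFrobenius_def, map_add, iterateFrobenius_def,
    iterateFrobenius_def, ← pow_mul, ← sq, ← hK, FiniteField.pow_card, add_comm]

variable [DecidableEq K]

theorem image_frobeniusTrace_subset :
    univ.image (frobeniusTrace K p n) ⊆ ({c | c ^ p ^ n = c} : Finset K) := by
  intro c hc
  obtain ⟨y, -, rfl⟩ := mem_image.1 hc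
  simpa using frobeniusTrace_pow_self hK y

theorem card_ker_frobeniusTrace : #{y | frobeniusTrace K p n y = 0} = p ^ n := by
  have hker : #{y | frobeniusTrace K p n y = 0} ≤ p ^ n := by
    convert card_filter_pow_eq_mul_le (Fintype.two_le_of_card_eq_sq hK) (-1 : K) using 3
    simp [add_eq_zero_iff_eq_neg]
  have himage : #(univ.image (frobeniusTrace K p n)) ≤ p ^ n :=
    (card_le_card (image_frobeniusTrace_subset hK)).trans <| by
      simpa using card_filter_pow_eq_mul_le (Fintype.two_le_of_card_eq_sq hK) (1 : K)
  have := (frobeniusTrace K p n).card_image_mul_card_ker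
  rw [hK] at this
  nlinarith

theorem image_frobeniusTrace :
    univ.image (frobeniusTrace K p n) = ({c | c ^ p ^ n = c} : Finset K) := by
  refine eq_of_subset_of_card_le (image_frobeniusTrace_subset hK) ?_
  have hq : 0 < p ^ n := by have := Fintype.two_le_of_card_eq_sq hK; omega
  have := (frobeniusTrace K p n).card_image_mul_card_ker
  rw [hK, card_ker_frobeniusTrace hK, sq] at this
  rw [Nat.eq_of_mul_eq_mul_right hq this]
  simpa using card_filter_pow_eq_mul_le (Fintype.two_le_of_card_eq_sq hK) (1 : K)

theorem card_fiber_frobeniusTrace {c : K} (hc : c ^ p ^ n = c) :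
    #{y | frobeniusTrace K p n y = c} = p ^ n := by
  rw [(frobeniusTrace K p n).card_fiber_eq_card_ker, card_ker_frobeniusTrace hK]
  simpa [image_frobeniusTrace hK] using hc

theorem card_frobeniusTrace_snd_eq_fst_pow {m : ℕ} (hm : m ∣ p ^ n + 1) :
    #{P : K × K | frobeniusTrace K p n P.2 = P.1 ^ m} = p ^ n * (1 + m * (p ^ n - 1)) := calc
  _ = ∑ x, #{y | frobeniusTrace K p n y = x ^ m} := by
    simp only [card_filter, Fintype.sum_prod_type]
  _ = ∑ x : K, if (x ^ m) ^ p ^ n = x ^ m then p ^ n else 0 := by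
    refine sum_congr rfl fun x _ => ?_
    split_ifs with h
    · exact card_fiber_frobeniusTrace hK h
    · refine card_eq_zero.2 (filter_eq_empty_iff.2 fun y _ hy => h ?_)
      rw [← hy, frobeniusTrace_pow_self hK]
  _ = p ^ n * (1 + m * (p ^ n - 1)) := by
    rw [← sum_filter, sum_const, smul_eq_mul, card_filter_pow_pow_eq_pow hK hm, mul_comm]

end FrobeniusTrace

theorem stmt8_general (q m : ℕ) (hmdvd : m ∣ q + 1)
    (F : Type*) [Field F] [Fintype F] (hF : Fintype.card F = q ^ 2) :
    {P : F × F | P.2 ^ q + P.2 = P.1 ^ m}.ncard = q * (1 + m * (q - 1)) := by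
  classical
  obtain ⟨p, _, k, hp, hk⟩ := FiniteField.card' F
  have : Fact p.Prime := ⟨hp⟩
  obtain ⟨n, -, rfl⟩ := (Nat.dvd_prime_pow hp).1 <| show q ∣ p ^ (k : ℕ) by
    rw [← hk, hF]; exact dvd_pow_self q two_ne_zero
  rw [Set.ncard_eq_toFinset_card', Set.toFinset_ofPred]
  exact card_frobeniusTrace_snd_eq_fst_pow hF hmdvd

theorem stmt8 (q m : ℕ) (hq : ∃ (p n : ℕ), p.Prime ∧ 0 < n ∧ q = p ^ n)
    (hm : 2 < m) (hmdvd : m ∣ q + 1)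
    (F : Type*) [Field F] [Fintype F] (hF : Fintype.card F = q ^ 2) :
    {P : F × F | P.2 ^ q + P.2 = P.1 ^ m}.ncard = q * (1 + m * (q - 1)) :=
  stmt8_general q m hmdvd F hF
end

section
/- Let q be a prime power, r an odd integer, and consider the solutions of y^q + y = x^{q^r+1} over F_{q^{2r}} under the group action generated by σ(x,y) = (αx, α^{q^r+1}y), where α ∈ F_{q^{2r}}^* has order (q^r+1)(q-1). Then: the point (0,0) is a fixed point; the q-1 points of the form (0,b) with b ≠ 0 and b^q + b = 0 form a single orbit of length q-1; and every point (x,y) with x ≠ 0 lies in an orbit of length (q^r+1)(q-1). -/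
/-!
Both orbits are orbits of a cyclic group acting freely: `σ^j (x, y)` is determined by `α^j` as
soon as `x ≠ 0`, and `σ^j (0, b)` by `(α^(q^r+1))^j` as soon as `b ≠ 0`. The orbit lengths are
therefore the orders of `α` and of `α^(q^r+1)`, namely `(q^r+1)(q-1)` and `q-1`.
-/

open Function

theorem ncard_setOf_exists_eq_apply_pow {G X : Type*} [Group G] {f : G → X}
    (hf : Injective f) (g : G) :
    {P : X | ∃ j : ℕ, P = f (g ^ j)}.ncard = orderOf g := by
  have horbit : {P : X | ∃ j : ℕ, P = f (g ^ j)} = f '' (Submonoid.powers g : Set G) := by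
    ext P
    simp [Submonoid.mem_powers_iff, eq_comm]
  rw [horbit, Set.ncard_image_of_injective _ hf, ← Nat.card_coe_set_eq,
    SetLike.coe_sort_coe, Nat.card_submonoidPowers]

theorem orderOf_pow_of_orderOf_eq_mul {G : Type*} [Monoid G] {x : G} {m n : ℕ}
    (hx : orderOf x = m * n) (hm : m ≠ 0) : orderOf (x ^ m) = n := by
  rw [orderOf_pow_of_dvd hm (hx ▸ dvd_mul_right m n), hx, Nat.mul_div_cancel_left n (by omega)]

theorem stmt9_general (q r : ℕ)
    (F : Type*) [Field F]
    (α : Fˣ) (hα : orderOf α = (q ^ r + 1) * (q - 1)) :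
    (∀ j : ℕ, (((α : F) ^ j * 0, ((α : F) ^ (q ^ r + 1)) ^ j * 0) : F × F) = (0, 0)) ∧
    (∀ b : F, b ≠ 0 → b ^ q + b = 0 →
      {P : F × F | ∃ j : ℕ, P = (0, ((α : F) ^ (q ^ r + 1)) ^ j * b)}.ncard = q - 1) ∧
    (∀ x y : F, x ≠ 0 → y ^ q + y = x ^ (q ^ r + 1) →
      {P : F × F | ∃ j : ℕ,
          P = ((α : F) ^ j * x, ((α : F) ^ (q ^ r + 1)) ^ j * y)}.ncard
        = (q ^ r + 1) * (q - 1)) := by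
  refine ⟨fun j => by simp, fun b hb _ => ?_, fun x y hx _ => ?_⟩
  · have hinj : Injective fun u : Fˣ => ((0 : F), (u : F) * b) :=
      fun u v h => Units.ext (mul_right_cancel₀ hb (Prod.ext_iff.1 h).2)
    rw [← orderOf_pow_of_orderOf_eq_mul hα (by positivity),
      ← ncard_setOf_exists_eq_apply_pow hinj]
    simp only [Units.val_pow_eq_pow_val]
  · have hinj : Injective fun u : Fˣ => ((u : F) * x, (u : F) ^ (q ^ r + 1) * y) :=
      fun u v h => Units.ext (mul_right_cancel₀ hx (Prod.ext_iff.1 h).1)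
    rw [← hα, ← ncard_setOf_exists_eq_apply_pow hinj]
    simp only [Units.val_pow_eq_pow_val, pow_right_comm]

theorem stmt9 (q r : ℕ) (hq : ∃ (p n : ℕ), p.Prime ∧ 0 < n ∧ q = p ^ n)
    (hr : Odd r) (hr' : 0 < r)
    (F : Type*) [Field F] [Fintype F] (hF : Fintype.card F = q ^ (2 * r))
    (α : Fˣ) (hα : orderOf α = (q ^ r + 1) * (q - 1)) :
    (∀ j : ℕ, (((α : F) ^ j * 0, ((α : F) ^ (q ^ r + 1)) ^ j * 0) : F × F) = (0, 0)) ∧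
    (∀ b : F, b ≠ 0 → b ^ q + b = 0 →
      {P : F × F | ∃ j : ℕ, P = (0, ((α : F) ^ (q ^ r + 1)) ^ j * b)}.ncard = q - 1) ∧
    (∀ x y : F, x ≠ 0 → y ^ q + y = x ^ (q ^ r + 1) →
      {P : F × F | ∃ j : ℕ,
          P = ((α : F) ^ j * x, ((α : F) ^ (q ^ r + 1)) ^ j * y)}.ncard
        = (q ^ r + 1) * (q - 1)) :=
  stmt9_general q r F α hα
end
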